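/- (Step 3.) For every α ∈ (0,2], every f ∈ C^∞(𝕋^d) with mean zero and every ε > 0, lim_{n→∞} | (4π²)^α n^{−d−2α} ∑_{x∈𝕋_n^d} |∑_{z∈ℤ_n^d∖{0}} φ̂_ε(z) e^{−2πi z·x} f̂_n(z)/λ_z|^α − n^{−d} ∑_{x∈𝕋_n^d} |∑_{z∈ℤ_n^d∖{0}} φ̂_ε(z) e^{−2πi z·x} f̂_n(z)/‖z‖²|^α | = 0, where ‖z‖ is the Euclidean norm of z. -/

import Mathlib

open MeasureTheory Filter Finset
open scoped BigOperators Topology Real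

noncomputable section

/-- `e^{2πi t}`. -/
def e2pi (t : ℝ) : ℂ := Complex.exp (2 * (Real.pi : ℂ) * Complex.I * (t : ℂ))

/-- The integers in `[−n/2, n/2)`, a complete residue system mod `n`. -/
def boxZ (n : ℕ) : Finset ℤ := Finset.Ico (-((n : ℤ) / 2)) ((n : ℤ) - (n : ℤ) / 2)

/-- The discrete torus `ℤ_n^d = [−n/2, n/2]^d ∩ ℤ^d` (a complete residue system mod `n`). -/
def boxZd (d n : ℕ) : Finset (Fin d → ℤ) := Fintype.piFinset fun _ => boxZ n

/-- Dot product of two integer vectors, as a real number. -/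
def dotZ {d : ℕ} (x z : Fin d → ℤ) : ℝ := ∑ i, (x i : ℝ) * (z i : ℝ)

/-- Dot product `z · x` of an integer vector with a real vector. -/
def dotR {d : ℕ} (z : Fin d → ℤ) (x : Fin d → ℝ) : ℝ := ∑ i, (z i : ℝ) * x i

/-- The squared Euclidean norm `‖z‖²` of an integer vector. -/
def nsq {d : ℕ} (z : Fin d → ℤ) : ℝ := ∑ i, ((z i : ℝ)) ^ 2

/-- The eigenvalue `λ_w = −4 ∑_i sin²(π w_i/n)` of the discrete Laplacian on `ℤ_n^d`. -/
def lambdaN (d n : ℕ) (z : Fin d → ℤ) : ℝ := -4 * ∑ i, Real.sin (Real.pi * (z i : ℝ) / n) ^ 2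

/-- The normalizing constant `c_n = 4π² n^{d − d/α − 2}`. -/
def cN (d : ℕ) (α : ℝ) (n : ℕ) : ℝ := 4 * Real.pi ^ 2 * (n : ℝ) ^ ((d : ℝ) - (d : ℝ) / α - 2)

/-- The point `y/n ∈ 𝕋_n^d ⊂ 𝕋^d` associated with `y ∈ ℤ_n^d`. -/
def tor {d : ℕ} (n : ℕ) (y : Fin d → ℤ) : Fin d → ℝ := fun i => (y i : ℝ) / n

/-- `f ∈ C^∞(𝕋^d)` with mean zero, modelled as a smooth `ℤ^d`-periodic function on `ℝ^d`
with zero integral over a fundamental domain. -/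
def IsSmoothPeriodicMeanZero {d : ℕ} (f : (Fin d → ℝ) → ℝ) : Prop :=
  ContDiff ℝ (⊤ : ℕ∞) f ∧ (∀ (x : Fin d → ℝ) (z : Fin d → ℤ), f (x + fun i => (z i : ℝ)) = f x) ∧
    (∫ x in Set.Icc (0 : Fin d → ℝ) 1, f x) = 0

/-- Fourier coefficient `f̂(z) = ∫_{𝕋^d} f(x) e^{−2πi z·x} dx`. -/
def fHat {d : ℕ} (f : (Fin d → ℝ) → ℝ) (z : Fin d → ℤ) : ℂ :=
  ∫ x in Set.Icc (0 : Fin d → ℝ) 1, (f x : ℂ) * e2pi (-(dotR z x))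

/-- Discrete Fourier coefficient `f̂_n(z) = n^{−d} ∑_{w∈𝕋_n^d} f(w) e^{2πi w·z}`. -/
def fHatN {d : ℕ} (f : (Fin d → ℝ) → ℝ) (n : ℕ) (z : Fin d → ℤ) : ℂ :=
  ((n : ℂ) ^ d)⁻¹ * ∑ y ∈ boxZd d n, (f (tor n y) : ℂ) * e2pi (dotZ y z / n)

/-- `R_n(w) = ∫_{B(w,1/(2n))} (f(u) − f(w)) du`, `B` the ball in the `ℓ^∞` metric. -/
def Rn {d : ℕ} (f : (Fin d → ℝ) → ℝ) (n : ℕ) (w : Fin d → ℝ) : ℝ :=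
  ∫ u in Set.Icc (fun i => w i - 1 / (2 * n)) (fun i => w i + 1 / (2 * n)), (f u - f w)

/-- `l_n(x) = −(c_n/n^{2d}) ∑_{w∈𝕋_n^d} f(w) ∑_{z∈ℤ_n^d∖{0}} χ_{−z}(x) χ_{−z}(nw)/λ_z`. -/
def lN {d : ℕ} (f : (Fin d → ℝ) → ℝ) (α : ℝ) (n : ℕ) (x : Fin d → ℤ) : ℂ :=
  -((cN d α n / (n : ℝ) ^ (2 * d) : ℝ) : ℂ) * ∑ y ∈ boxZd d n, (f (tor n y) : ℂ) *
    ∑ z ∈ (boxZd d n).erase 0, e2pi (-(dotZ x z + dotZ y z) / n) / ((lambdaN d n z : ℝ) : ℂ)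

/-- `C_n(x) = −(c_n/n^{d}) ∑_{w∈𝕋_n^d} R_n(w) ∑_{z∈ℤ_n^d∖{0}} χ_{−z}(x) χ_{−z}(nw)/λ_z`. -/
def cnF {d : ℕ} (f : (Fin d → ℝ) → ℝ) (α : ℝ) (n : ℕ) (x : Fin d → ℤ) : ℂ :=
  -((cN d α n / (n : ℝ) ^ d : ℝ) : ℂ) * ∑ y ∈ boxZd d n, (Rn f n (tor n y) : ℂ) *
    ∑ z ∈ (boxZd d n).erase 0, e2pi (-(dotZ x z + dotZ y z) / n) / ((lambdaN d n z : ℝ) : ℂ)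

/-- `k_n = l_n + C_n`. -/
def kN {d : ℕ} (f : (Fin d → ℝ) → ℝ) (α : ℝ) (n : ℕ) (x : Fin d → ℤ) : ℂ :=
  lN f α n x + cnF f α n x

/-- The limiting field `(−Δ)^{−1}f(x) = ∑_{z∈ℤ^d∖{0}} ‖z‖^{−2} f̂(z) e^{−2πi z·x}`. -/
def contField {d : ℕ} (f : (Fin d → ℝ) → ℝ) (x : Fin d → ℝ) : ℂ :=
  ∑' z : {z : Fin d → ℤ // z ≠ 0},
    e2pi (-(dotR (z : Fin d → ℤ) x)) / ((nsq (z : Fin d → ℤ) : ℝ) : ℂ) * fHat f (z : Fin d → ℤ)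

/-- Fourier transform of the rescaled mollifier:
`φ̂_ε(z) = ∫_{ℝ^d} ε^{−d} φ(x/ε) e^{−2πi z·x} dx`. -/
def phiHatEps {d : ℕ} (φ : SchwartzMap (Fin d → ℝ) ℝ) (ε : ℝ) (z : Fin d → ℤ) : ℂ :=
  ∫ x : Fin d → ℝ, (((ε ^ d)⁻¹ * φ (ε⁻¹ • x) : ℝ) : ℂ) * e2pi (-(dotR z x))

/-! ### Auxiliary lemmas -/

/-- Compatibility: the complex absolute value as a bundled absolute value (equal to the norm). -/
def Complex.abs : AbsoluteValue ℂ ℝ := IsAbsoluteValue.toAbsoluteValue (norm : ℂ → ℝ)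

lemma Complex.norm_eq_abs (z : ℂ) : ‖z‖ = Complex.abs z := rfl

@[simp]
lemma Complex.abs_ofReal (r : ℝ) : Complex.abs (r : ℂ) = |r| := by
  rw [← Complex.norm_eq_abs, Complex.norm_real, Real.norm_eq_abs]

@[simp]
lemma Complex.abs_natCast (m : ℕ) : Complex.abs (m : ℂ) = m := by
  rw [← Complex.norm_eq_abs, Complex.norm_natCast]

lemma Complex.abs_exp (z : ℂ) : Complex.abs (Complex.exp z) = Real.exp z.re := by
  rw [← Complex.norm_eq_abs, Complex.norm_exp]

lemma abs_e2pi (t : ℝ) : Complex.abs (e2pi t) = 1 := by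
  rw [e2pi, Complex.abs_exp]
  have : (2 * (Real.pi : ℂ) * Complex.I * (t : ℂ)).re = 0 := by simp
  rw [this, Real.exp_zero]

lemma card_boxZ (n : ℕ) : (boxZ n).card = n := by
  rw [boxZ, Int.card_Ico]; omega

lemma card_boxZd (d n : ℕ) : (boxZd d n).card = n ^ d := by
  rw [boxZd, Fintype.card_piFinset]
  simp [card_boxZ]

lemma abs_two_mul_le_of_mem_boxZ {n : ℕ} {z : ℤ} (hz : z ∈ boxZ n) : |2 * z| ≤ (n : ℤ) := by
  rw [boxZ, Finset.mem_Ico] at hz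
  rw [abs_le]
  omega

lemma sin_sub_le_sq (t : ℝ) : |Real.sin t - t| ≤ t ^ 2 / 2 := by
  have key : ∀ s : ℝ, 0 ≤ s → s - Real.sin s ≤ s ^ 2 / 2 := by
    intro s hs
    have h1 : ∀ u ∈ Set.Icc (0:ℝ) s, 1 - Real.cos u ≤ u := by
      intro u hu
      rcases le_or_gt u 2 with h2 | h2
      · nlinarith [Real.one_sub_sq_div_two_le_cos (x := u), hu.1]
      · nlinarith [Real.neg_one_le_cos u]
    have e1 : (∫ u in (0:ℝ)..s, (1 - Real.cos u)) = s - Real.sin s := by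
      rw [intervalIntegral.integral_sub intervalIntegrable_const
        (Real.continuous_cos.intervalIntegrable 0 s)]
      simp
    have e2 : (∫ u in (0:ℝ)..s, u) = s ^ 2 / 2 := by
      simpa using integral_id (a := 0) (b := s)
    rw [← e1, ← e2]
    apply intervalIntegral.integral_mono_on hs
    · exact intervalIntegrable_const.sub (Real.continuous_cos.intervalIntegrable 0 s)
    · exact continuous_id.intervalIntegrable 0 s
    · exact h1
  rcases le_or_gt 0 t with ht | ht
  · have := key t ht
    have h2 := Real.sin_le ht
    rw [abs_of_nonpos (by linarith)]
    linarith
  · have := key (-t) (by linarith)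
    rw [Real.sin_neg] at this
    have h2 := Real.le_sin ht.le
    rw [abs_of_nonneg (by linarith)]
    nlinarith

lemma jordan_sq {t : ℝ} (ht : |t| ≤ Real.pi / 2) :
    (4 / Real.pi ^ 2) * t ^ 2 ≤ Real.sin t ^ 2 := by
  have h := Real.mul_abs_le_abs_sin ht
  have hπ := Real.pi_pos
  have h0 : 0 ≤ 2 / Real.pi * |t| := by positivity
  have := mul_self_le_mul_self h0 h
  rw [← sq_abs (Real.sin t)]
  calc (4 / Real.pi ^ 2) * t ^ 2 = (2 / Real.pi * |t|) * (2 / Real.pi * |t|) := by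
        rw [← sq_abs t]; ring
    _ ≤ |Real.sin t| * |Real.sin t| := this
    _ = |Real.sin t| ^ 2 := (sq (|Real.sin t|)).symm

/-- subadditivity of `rpow` with exponent in `(0,1]`. -/
lemma rpow_add_le {p : ℝ} (hp : 0 < p) (hp1 : p ≤ 1) {x y : ℝ} (hx : 0 ≤ x) (hy : 0 ≤ y) :
    (x + y) ^ p ≤ x ^ p + y ^ p := by
  rcases eq_or_lt_of_le (by positivity : (0:ℝ) ≤ x + y) with h | h
  · rw [← h, Real.zero_rpow hp.ne']
    positivity
  · set s := x + y with hs
    have hxs : x / s ≤ 1 := by rw [div_le_one h]; linarith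
    have hys : y / s ≤ 1 := by rw [div_le_one h]; linarith
    have key : ∀ u : ℝ, 0 ≤ u → u ≤ 1 → u ≤ u ^ p := by
      intro u hu hu1
      rcases eq_or_lt_of_le hu with h0 | h0
      · rw [← h0, Real.zero_rpow hp.ne']
      · calc u = u ^ (1:ℝ) := (Real.rpow_one u).symm
          _ ≤ u ^ p := Real.rpow_le_rpow_of_exponent_ge h0 hu1 hp1
    have h1 : x / s + y / s = 1 := by field_simp; linarith
    have h2 : (1:ℝ) ≤ (x/s) ^ p + (y/s) ^ p := by
      rw [← h1]
      exact add_le_add (key _ (by positivity) hxs) (key _ (by positivity) hys)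
    have h3 : s ^ p * 1 ≤ s ^ p * ((x/s) ^ p + (y/s) ^ p) :=
      mul_le_mul_of_nonneg_left h2 (Real.rpow_nonneg h.le p)
    calc (x + y) ^ p = s ^ p * 1 := by rw [mul_one]
      _ ≤ s ^ p * ((x/s) ^ p + (y/s) ^ p) := h3
      _ = x ^ p + y ^ p := by
          rw [mul_add, ← Real.mul_rpow h.le (by positivity), ← Real.mul_rpow h.le (by positivity),
            mul_div_cancel₀ _ h.ne', mul_div_cancel₀ _ h.ne']

lemma rpow_diff_le {p : ℝ} (hp : 0 < p) (hp1 : p ≤ 1) {a b : ℝ} (ha : 0 ≤ a) (hb : 0 ≤ b) :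
    |a ^ p - b ^ p| ≤ |a - b| ^ p := by
  wlog hab : b ≤ a with H
  · rw [abs_sub_comm, abs_sub_comm a b]
    exact H hp hp1 hb ha (le_of_not_ge hab)
  have h1 : a ^ p ≤ (a - b) ^ p + b ^ p := by
    calc a ^ p = ((a - b) + b) ^ p := by ring_nf
      _ ≤ (a - b) ^ p + b ^ p := rpow_add_le hp hp1 (by linarith) hb
  have h2 : b ^ p ≤ a ^ p := Real.rpow_le_rpow hb hab hp.le
  rw [abs_of_nonneg (by linarith), abs_of_nonneg (by linarith)]
  linarith

lemma exists_bound_of_periodic {d : ℕ} {f : (Fin d → ℝ) → ℝ} (hf : IsSmoothPeriodicMeanZero f) :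
    ∃ M : ℝ, 0 ≤ M ∧ ∀ x, |f x| ≤ M := by
  have hcont : Continuous f := hf.1.continuous
  obtain ⟨M, hM⟩ := (isCompact_Icc (a := (0 : Fin d → ℝ)) (b := 1)).exists_bound_of_continuousOn
    hcont.continuousOn
  refine ⟨max M 0, le_max_right _ _, fun x => ?_⟩
  set z : Fin d → ℤ := fun i => ⌊x i⌋ with hz
  set w : Fin d → ℝ := fun i => x i - ⌊x i⌋ with hw
  have hxw : f x = f w := by
    have := hf.2.1 w z
    have hwx : (w + fun i => ((z i : ℝ))) = x := by
      funext i; simp [hw, hz]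
    rw [hwx] at this
    exact this
  have hwmem : w ∈ Set.Icc (0 : Fin d → ℝ) 1 := by
    constructor <;> intro i
    · have := Int.floor_le (x i)
      simp only [hw, Pi.zero_apply]
      linarith
    · have := (Int.lt_floor_add_one (x i)).le
      simp only [hw, Pi.one_apply]
      linarith
  rw [hxw]
  calc |f w| = ‖f w‖ := rfl
    _ ≤ M := hM w hwmem
    _ ≤ max M 0 := le_max_left _ _

lemma abs_fHatN_le {d : ℕ} {f : (Fin d → ℝ) → ℝ} {M : ℝ} (hM : ∀ x, |f x| ≤ M)
    {n : ℕ} (hn : 1 ≤ n) (z : Fin d → ℤ) : Complex.abs (fHatN f n z) ≤ M := by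
  have hn0 : (0:ℝ) < (n:ℝ) := by exact_mod_cast hn
  rw [fHatN]
  rw [map_mul]
  have h1 : Complex.abs (((n : ℂ) ^ d)⁻¹) = ((n : ℝ) ^ d)⁻¹ := by
    rw [map_inv₀, map_pow]
    simp
  rw [h1]
  have h2 : Complex.abs (∑ y ∈ boxZd d n, (f (tor n y) : ℂ) * e2pi (dotZ y z / n)) ≤
      ∑ y ∈ boxZd d n, M := by
    refine (AbsoluteValue.sum_le _ _ _).trans (Finset.sum_le_sum fun y _ => ?_)
    rw [map_mul, abs_e2pi, mul_one, Complex.abs_ofReal]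
    exact hM _
  rw [Finset.sum_const, card_boxZd, nsmul_eq_mul] at h2
  calc ((n : ℝ) ^ d)⁻¹ * Complex.abs (∑ y ∈ boxZd d n, (f (tor n y) : ℂ) * e2pi (dotZ y z / n)) ≤
      ((n : ℝ) ^ d)⁻¹ * ((n ^ d : ℕ) * M) := by
        apply mul_le_mul_of_nonneg_left h2 (by positivity)
    _ = M := by
        push_cast
        field_simp
    _ ≤ M := le_refl M

lemma nsq_ge_one {d : ℕ} {z : Fin d → ℤ} (hz : z ≠ 0) : 1 ≤ nsq z := by
  have : ∃ i, z i ≠ 0 := by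
    by_contra h
    push_neg at h
    exact hz (funext h)
  obtain ⟨i, hi⟩ := this
  have h1 : (1:ℝ) ≤ ((z i : ℝ)) ^ 2 := by
    have : (1:ℤ) ≤ |z i| := Int.one_le_abs hi
    have h2 : (1:ℝ) ≤ |((z i : ℝ))| := by exact_mod_cast this
    rw [← sq_abs]
    nlinarith [abs_nonneg ((z i : ℝ))]
  rw [nsq]
  calc (1:ℝ) ≤ ((z i : ℝ)) ^ 2 := h1
    _ ≤ ∑ j, ((z j : ℝ)) ^ 2 :=
        Finset.single_le_sum (f := fun j => ((z j : ℝ)) ^ 2)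
          (fun j _ => sq_nonneg _) (Finset.mem_univ i)

lemma abs_coord_le_nsq {d : ℕ} (z : Fin d → ℤ) (i : Fin d) : |(z i : ℝ)| ≤ nsq z := by
  have h1 : |(z i : ℝ)| ≤ ((z i : ℝ)) ^ 2 := by
    rcases eq_or_ne (z i) 0 with h | h
    · simp [h]
    · have : (1:ℝ) ≤ |((z i : ℝ))| := by exact_mod_cast Int.one_le_abs h
      nlinarith [abs_nonneg ((z i : ℝ)), sq_abs ((z i : ℝ))]
  refine h1.trans ?_
  rw [nsq]
  exact Finset.single_le_sum (f := fun j => ((z j : ℝ)) ^ 2)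
    (fun j _ => sq_nonneg _) (Finset.mem_univ i)

/-- The key eigenvalue comparison: for `z ∈ ℤ_n^d \ {0}`,
`|4π²/n² / λ_z + 1/‖z‖²| ≤ π³/(4n)`, and `λ_z < 0`. -/
lemma lambda_comparison {d : ℕ} (hd : 1 ≤ d) {n : ℕ} (hn : 1 ≤ n) {z : Fin d → ℤ}
    (hz : z ∈ (boxZd d n).erase 0) :
    lambdaN d n z < 0 ∧
      |4 * Real.pi ^ 2 / (n:ℝ) ^ 2 / lambdaN d n z + 1 / nsq z| ≤ Real.pi ^ 3 / (4 * n) := by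
  have hπ := Real.pi_pos
  have hn0 : (0:ℝ) < (n:ℝ) := by exact_mod_cast hn
  obtain ⟨hz0, hzbox⟩ := Finset.mem_erase.mp hz
  have hzbox' : ∀ i, z i ∈ boxZ n := by
    intro i; exact (Fintype.mem_piFinset.mp hzbox) i
  set t : Fin d → ℝ := fun i => Real.pi * (z i : ℝ) / n with ht
  have htle : ∀ i, |t i| ≤ Real.pi / 2 := by
    intro i
    have h := abs_two_mul_le_of_mem_boxZ (hzbox' i)
    rw [abs_le] at h
    have h' : |(z i : ℝ)| ≤ (n:ℝ) / 2 := by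
      rw [abs_le]
      have h1 : (-(n:ℝ)) ≤ 2 * (z i : ℝ) := by exact_mod_cast h.1
      have h2 : 2 * (z i : ℝ) ≤ (n:ℝ) := by exact_mod_cast h.2
      constructor <;> linarith
    rw [ht, abs_div, abs_mul, abs_of_pos hπ, abs_of_pos hn0, div_le_div_iff₀ hn0 two_pos]
    calc Real.pi * |(z i : ℝ)| * 2 ≤ Real.pi * ((n:ℝ)/2) * 2 := by nlinarith [hπ.le]
      _ = Real.pi * (n:ℝ) := by ring
  set Q := nsq z with hQ
  have hQ1 : 1 ≤ Q := nsq_ge_one hz0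
  have hQ0 : 0 < Q := by linarith
  set T := ∑ i, (t i) ^ 2 with hT
  have hTQ : T = Real.pi ^ 2 / (n:ℝ) ^ 2 * Q := by
    rw [hT, hQ, nsq, Finset.mul_sum]
    congr 1; funext i
    rw [ht]; field_simp
  have hT0 : 0 < T := by rw [hTQ]; positivity
  set L := 4 * ∑ i, Real.sin (t i) ^ 2 with hL
  have hlam : lambdaN d n z = -L := by
    rw [lambdaN, hL]; ring
  have hLlow : 16 / Real.pi ^ 2 * T ≤ L := by
    rw [hL, hT, Finset.mul_sum, Finset.mul_sum]
    apply Finset.sum_le_sum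
    intro i _
    have := jordan_sq (htle i)
    calc 16 / Real.pi ^ 2 * t i ^ 2 = 4 * (4 / Real.pi ^ 2 * t i ^ 2) := by ring
      _ ≤ 4 * Real.sin (t i) ^ 2 := by linarith
  have hL0 : 0 < L := lt_of_lt_of_le (by positivity) hLlow
  have hlam0 : lambdaN d n z < 0 := by rw [hlam]; linarith
  refine ⟨hlam0, ?_⟩
  -- |L - 4T| ≤ 4 π Q / n * T
  have hnum : |L - 4 * T| ≤ 4 * Real.pi * Q / n * T := by
    have hper : ∀ i, |Real.sin (t i) ^ 2 - t i ^ 2| ≤ Real.pi * Q / n * t i ^ 2 := by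
      intro i
      have h1 : |Real.sin (t i) - t i| ≤ t i ^ 2 / 2 := sin_sub_le_sq (t i)
      have h2 : |Real.sin (t i) + t i| ≤ 2 * |t i| := by
        calc |Real.sin (t i) + t i| ≤ |Real.sin (t i)| + |t i| := abs_add_le _ _
          _ ≤ |t i| + |t i| := by linarith [Real.abs_sin_le_abs (x := t i)]
          _ = 2 * |t i| := by ring
      have h3 : |t i| ≤ Real.pi * Q / n := by
        rw [ht]
        rw [abs_div, abs_mul, abs_of_pos hπ, abs_of_pos hn0]
        gcongr
        exact abs_coord_le_nsq z i
      calc |Real.sin (t i) ^ 2 - t i ^ 2|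
          = |Real.sin (t i) - t i| * |Real.sin (t i) + t i| := by
            rw [← abs_mul]; congr 1; ring
        _ ≤ (t i ^ 2 / 2) * (2 * |t i|) := by
            apply mul_le_mul h1 h2 (abs_nonneg _) (by positivity)
        _ = |t i| * t i ^ 2 := by ring
        _ ≤ Real.pi * Q / n * t i ^ 2 := by nlinarith [sq_nonneg (t i), abs_nonneg (t i)]
    calc |L - 4 * T| = |4 * ∑ i, (Real.sin (t i) ^ 2 - t i ^ 2)| := by
          rw [hL, hT, Finset.sum_sub_distrib]; congr 1; ring
      _ = 4 * |∑ i, (Real.sin (t i) ^ 2 - t i ^ 2)| := by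
          rw [abs_mul]; norm_num
      _ ≤ 4 * ∑ i, |Real.sin (t i) ^ 2 - t i ^ 2| := by
          have := Finset.abs_sum_le_sum_abs (fun i => Real.sin (t i) ^ 2 - t i ^ 2) Finset.univ
          linarith
      _ ≤ 4 * ∑ i, Real.pi * Q / n * t i ^ 2 := by
          have := Finset.sum_le_sum (fun i (_ : i ∈ Finset.univ) => hper i)
          linarith
      _ = 4 * Real.pi * Q / n * T := by
          rw [← Finset.mul_sum, ← hT]; ring
  -- now assemble
  have hc : 4 * Real.pi ^ 2 / (n:ℝ) ^ 2 = 4 * T / Q := by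
    rw [hTQ]; field_simp
  have hD : 4 * Real.pi ^ 2 / (n:ℝ) ^ 2 / lambdaN d n z + 1 / Q = (L - 4 * T) / (L * Q) := by
    rw [hlam, hc]
    field_simp
    ring
  rw [hD, abs_div, abs_of_pos (by positivity : (0:ℝ) < L * Q)]
  rw [div_le_div_iff₀ (by positivity) (by positivity)]
  calc |L - 4 * T| * (4 * n) ≤ (4 * Real.pi * Q / n * T) * (4 * n) := by
        apply mul_le_mul_of_nonneg_right hnum (by positivity)
    _ = 16 * Real.pi * Q * T := by field_simp; ring
    _ ≤ Real.pi ^ 3 * (L * Q) := by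
        have : 16 / Real.pi ^ 2 * T ≤ L := hLlow
        have h5 : Real.pi ^ 3 * (L * Q) ≥ Real.pi ^ 3 * ((16 / Real.pi ^ 2 * T) * Q) := by
          apply mul_le_mul_of_nonneg_left ?_ (by positivity)
          exact mul_le_mul_of_nonneg_right hLlow hQ0.le
        calc 16 * Real.pi * Q * T = Real.pi ^ 3 * ((16 / Real.pi ^ 2 * T) * Q) := by
              field_simp
          _ ≤ Real.pi ^ 3 * (L * Q) := h5

open scoped RealInnerProductSpace in
/-- Rapid decay of the Fourier transform of the mollifier, in product form. -/
lemma phiHatEps_decay {d : ℕ} (φ : SchwartzMap (Fin d → ℝ) ℝ) {ε : ℝ} (hε : 0 < ε) :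
    ∃ C : ℝ, 0 ≤ C ∧ ∀ z : Fin d → ℤ,
      Complex.abs (phiHatEps φ ε z) ≤ C * (∏ i, ((1:ℝ) + |(z i : ℝ)|) ^ 2)⁻¹ := by
  classical
  set E := EuclideanSpace ℝ (Fin d) with hE
  let a : E ≃L[ℝ] (Fin d → ℝ) := EuclideanSpace.equiv (Fin d) ℝ
  let G : E →L[ℝ] (Fin d → ℝ) := ε⁻¹ • (a : E →L[ℝ] (Fin d → ℝ))
  have hGapp : ∀ x : E, G x = ε⁻¹ • (a x) := fun x => rfl
  have hup : ∃ (k : ℕ) (C : ℝ), ∀ x : E, ‖x‖ ≤ C * (1 + ‖G x‖) ^ k := by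
    refine ⟨1, ‖(a.symm : (Fin d → ℝ) →L[ℝ] E)‖ * ε + 1, fun x => ?_⟩
    have h1 : ‖x‖ ≤ ‖(a.symm : (Fin d → ℝ) →L[ℝ] E)‖ * ‖a x‖ := by
      have : x = a.symm (a x) := (a.symm_apply_apply x).symm
      calc ‖x‖ = ‖a.symm (a x)‖ := by rw [← this]
        _ ≤ ‖(a.symm : (Fin d → ℝ) →L[ℝ] E)‖ * ‖a x‖ :=
            (a.symm : (Fin d → ℝ) →L[ℝ] E).le_opNorm (a x)
    have h2 : ‖a x‖ = ε * ‖G x‖ := by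
      rw [hGapp, norm_smul, norm_inv, Real.norm_eq_abs, abs_of_pos hε]
      field_simp
    have h3 : (0:ℝ) ≤ ‖(a.symm : (Fin d → ℝ) →L[ℝ] E)‖ * ε := by positivity
    have h4 : ‖G x‖ ≤ 1 + ‖G x‖ := by linarith [norm_nonneg (G x)]
    calc ‖x‖ ≤ ‖(a.symm : (Fin d → ℝ) →L[ℝ] E)‖ * (ε * ‖G x‖) := by rw [← h2]; exact h1
      _ = (‖(a.symm : (Fin d → ℝ) →L[ℝ] E)‖ * ε) * ‖G x‖ := by ring
      _ ≤ (‖(a.symm : (Fin d → ℝ) →L[ℝ] E)‖ * ε + 1) * (1 + ‖G x‖) := by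
          apply mul_le_mul (by linarith) h4 (norm_nonneg _) (by linarith)
      _ = (‖(a.symm : (Fin d → ℝ) →L[ℝ] E)‖ * ε + 1) * (1 + ‖G x‖) ^ 1 := by rw [pow_one]
  let ψr : SchwartzMap E ℝ := SchwartzMap.compCLM ℝ G.hasTemperateGrowth hup φ
  let ψc : SchwartzMap E ℂ :=
    SchwartzMap.bilinLeftCLM (ContinuousLinearMap.lsmul ℝ ℝ : ℝ →L[ℝ] ℂ →L[ℝ] ℂ)
      (Function.HasTemperateGrowth.const (1:ℂ)) ψr
  have hψc : ∀ x : E, ψc x = ((φ (ε⁻¹ • (a x)) : ℝ) : ℂ) := by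
    intro x
    show (ContinuousLinearMap.lsmul ℝ ℝ) (ψr x) (1:ℂ) = _
    have : ψr x = φ (G x) := by
      show ((SchwartzMap.compCLM ℝ G.hasTemperateGrowth hup) φ) x = _
      rw [SchwartzMap.compCLM_apply]
      rfl
    rw [ContinuousLinearMap.lsmul_apply, this, hGapp]
    simp [Complex.real_smul]
  let χ : SchwartzMap E ℂ := ((ε ^ d)⁻¹ : ℝ) • ψc
  have hχ : ∀ x : E, χ x = (((ε ^ d)⁻¹ * φ (ε⁻¹ • (a x)) : ℝ) : ℂ) := by
    intro x
    rw [SchwartzMap.smul_apply, hψc, Complex.real_smul]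
    push_cast
    ring
  let Φ : SchwartzMap E ℂ := SchwartzMap.fourierTransformCLM ℝ χ
  -- identification
  have hid : ∀ z : Fin d → ℤ,
      phiHatEps φ ε z = Φ ((WithLp.equiv 2 (Fin d → ℝ)).symm (fun i => (z i : ℝ))) := by
    intro z
    set w : E := (WithLp.equiv 2 (Fin d → ℝ)).symm (fun i => (z i : ℝ)) with hw
    have hΦw : Φ w = ∫ v : E, Complex.exp (↑(-2 * Real.pi * ⟪v, w⟫) * Complex.I) • χ v := by
      show (SchwartzMap.fourierTransformCLM ℝ χ) w = _
      rw [SchwartzMap.fourierTransformCLM_apply, SchwartzMap.fourier_coe, Real.fourier_eq']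
    set meq := (MeasurableEquiv.toLp 2 (Fin d → ℝ)).symm with hmeq
    have hmp : MeasurePreserving (⇑meq) volume volume :=
      EuclideanSpace.volume_preserving_symm_measurableEquiv_toLp (Fin d)
    have htrans := hmp.integral_comp meq.measurableEmbedding
      (fun x : Fin d → ℝ => (((ε ^ d)⁻¹ * φ (ε⁻¹ • x) : ℝ) : ℂ) * e2pi (-(dotR z x)))
    rw [phiHatEps, ← htrans, hΦw]
    apply integral_congr_ae
    filter_upwards with x
    have hmeqx : (meq x : Fin d → ℝ) = a x := rfl
    have hinner : ⟪x, w⟫ = dotR z (meq x) := by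
      rw [PiLp.inner_apply, dotR]
      simp only [RCLike.inner_apply, conj_trivial]
      rw [hmeqx]
      apply Finset.sum_congr rfl
      intro i _
      have hwi : w i = (z i : ℝ) := rfl
      have hai : (a x : Fin d → ℝ) i = x i := rfl
      rw [hwi, hai, mul_comm]
    rw [hmeqx, hχ, hinner, smul_eq_mul, mul_comm]
    congr 1
    rw [e2pi, hmeqx]
    congr 1
    push_cast
    ring
  -- decay
  obtain ⟨C0, hC0, h0⟩ := Φ.decay 0 0
  obtain ⟨C1, hC1, h1⟩ := Φ.decay (2*d) 0
  refine ⟨2 ^ (2*d) * (C0 + C1), by positivity, fun z => ?_⟩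
  set w : E := (WithLp.equiv 2 (Fin d → ℝ)).symm (fun i => (z i : ℝ)) with hw
  have hΦb0 : ‖Φ w‖ ≤ C0 := by
    have := h0 w
    simpa [norm_iteratedFDeriv_zero] using this
  have hΦb1 : ‖w‖ ^ (2*d) * ‖Φ w‖ ≤ C1 := by
    have := h1 w
    simpa [norm_iteratedFDeriv_zero] using this
  have hcoord : ∀ i, |(z i : ℝ)| ≤ ‖w‖ := by
    intro i
    have h1' : ‖w‖ = Real.sqrt (∑ j, ‖w j‖ ^ 2) := EuclideanSpace.norm_eq w
    have h2' : |(z i : ℝ)| = Real.sqrt (‖w i‖ ^ 2) := by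
      have hwi : w i = (z i : ℝ) := rfl
      rw [hwi, Real.norm_eq_abs, Real.sqrt_sq_eq_abs, abs_abs]
    rw [h1', h2']
    apply Real.sqrt_le_sqrt
    exact Finset.single_le_sum (f := fun j => ‖w j‖ ^ 2)
      (fun j _ => sq_nonneg _) (Finset.mem_univ i)
  have hP : (∏ i, ((1:ℝ) + |(z i : ℝ)|) ^ 2) ≤ (1 + ‖w‖) ^ (2*d) := by
    calc (∏ i, ((1:ℝ) + |(z i : ℝ)|) ^ 2) ≤ ∏ _i : Fin d, ((1:ℝ) + ‖w‖) ^ 2 := by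
          apply Finset.prod_le_prod (fun i _ => by positivity)
          intro i _
          have := hcoord i
          have h3 : (1:ℝ) + |(z i : ℝ)| ≤ 1 + ‖w‖ := by linarith
          exact pow_le_pow_left₀ (by positivity) h3 2
      _ = ((1:ℝ) + ‖w‖) ^ (2*d) := by
          rw [Finset.prod_const, Finset.card_univ, Fintype.card_fin, ← pow_mul, mul_comm 2 d]
  have hpow : ((1:ℝ) + ‖w‖) ^ (2*d) ≤ 2 ^ (2*d) * (1 + ‖w‖ ^ (2*d)) := by
    have hm : (1:ℝ) + ‖w‖ ≤ 2 * max 1 ‖w‖ := by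
      rcases le_total ‖w‖ 1 with h | h
      · rw [max_eq_left h]; linarith
      · rw [max_eq_right h]; linarith
    have h5 : ((1:ℝ) + ‖w‖) ^ (2*d) ≤ (2 * max 1 ‖w‖) ^ (2*d) :=
      pow_le_pow_left₀ (by positivity) hm _
    have h6 : (2 * max 1 ‖w‖ : ℝ) ^ (2*d) = 2 ^ (2*d) * (max 1 ‖w‖) ^ (2*d) := mul_pow _ _ _
    have h7 : (max 1 ‖w‖ : ℝ) ^ (2*d) ≤ 1 + ‖w‖ ^ (2*d) := by
      rcases le_total ‖w‖ 1 with h | h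
      · rw [max_eq_left h, one_pow]
        have : (0:ℝ) ≤ ‖w‖ ^ (2*d) := by positivity
        linarith
      · rw [max_eq_right h]
        have : (0:ℝ) ≤ (1:ℝ) := zero_le_one
        linarith
    calc ((1:ℝ) + ‖w‖) ^ (2*d) ≤ 2 ^ (2*d) * (max 1 ‖w‖) ^ (2*d) := by rw [← h6]; exact h5
      _ ≤ 2 ^ (2*d) * (1 + ‖w‖ ^ (2*d)) := by
          apply mul_le_mul_of_nonneg_left h7 (by positivity)
  have hkey : Complex.abs (phiHatEps φ ε z) * (∏ i, ((1:ℝ) + |(z i : ℝ)|) ^ 2) ≤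
      2 ^ (2*d) * (C0 + C1) := by
    rw [hid z, ← hw, ← Complex.norm_eq_abs]
    calc ‖Φ w‖ * (∏ i, ((1:ℝ) + |(z i : ℝ)|) ^ 2) ≤ ‖Φ w‖ * ((1 + ‖w‖) ^ (2*d)) :=
          mul_le_mul_of_nonneg_left hP (norm_nonneg _)
      _ ≤ ‖Φ w‖ * (2 ^ (2*d) * (1 + ‖w‖ ^ (2*d))) :=
          mul_le_mul_of_nonneg_left hpow (norm_nonneg _)
      _ = 2 ^ (2*d) * (‖Φ w‖ + ‖w‖ ^ (2*d) * ‖Φ w‖) := by ring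
      _ ≤ 2 ^ (2*d) * (C0 + C1) := by
          apply mul_le_mul_of_nonneg_left (by linarith) (by positivity)
  have hPpos : (0:ℝ) < ∏ i, ((1:ℝ) + |(z i : ℝ)|) ^ 2 :=
    Finset.prod_pos (fun i _ => by positivity)
  rw [← le_div_iff₀ hPpos] at hkey
  calc Complex.abs (phiHatEps φ ε z) ≤
      (2 ^ (2*d) * (C0 + C1)) / (∏ i, ((1:ℝ) + |(z i : ℝ)|) ^ 2) := hkey
    _ = 2 ^ (2*d) * (C0 + C1) * (∏ i, ((1:ℝ) + |(z i : ℝ)|) ^ 2)⁻¹ := by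
        rw [div_eq_mul_inv]

/-- Uniform bound on the sum of `|φ̂_ε(z)|` over the discrete box. -/
lemma sum_phiHatEps_bound {d : ℕ} (φ : SchwartzMap (Fin d → ℝ) ℝ) {ε : ℝ} (hε : 0 < ε) :
    ∃ K : ℝ, 0 ≤ K ∧ ∀ n : ℕ,
      ∑ z ∈ (boxZd d n).erase 0, Complex.abs (phiHatEps φ ε z) ≤ K := by
  obtain ⟨C, hC, hCb⟩ := phiHatEps_decay φ hε
  have hsummable : Summable (fun m : ℤ => ((m:ℝ) ^ 2)⁻¹) := by
    have := (Real.summable_one_div_int_pow (p := 2)).mpr one_lt_two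
    simpa [one_div] using this
  set B : ℝ := 1 + ∑' m : ℤ, ((m:ℝ) ^ 2)⁻¹ with hB
  have htsum_nonneg : 0 ≤ ∑' m : ℤ, ((m:ℝ) ^ 2)⁻¹ :=
    tsum_nonneg (fun m => by positivity)
  have hB1 : (1:ℝ) ≤ B := by rw [hB]; linarith
  have hone : ∀ n : ℕ, ∑ m ∈ boxZ n, (((1:ℝ) + |(m:ℝ)|) ^ 2)⁻¹ ≤ B := by
    intro n
    have hsub : boxZ n ⊆ insert 0 ((boxZ n).erase 0) := by
      intro m hm
      rcases eq_or_ne m 0 with h | h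
      · rw [h]; exact Finset.mem_insert_self 0 _
      · exact Finset.mem_insert_of_mem (Finset.mem_erase.mpr ⟨h, hm⟩)
    have h1 : ∑ m ∈ boxZ n, (((1:ℝ) + |(m:ℝ)|) ^ 2)⁻¹ ≤
        ∑ m ∈ insert 0 ((boxZ n).erase 0), (((1:ℝ) + |(m:ℝ)|) ^ 2)⁻¹ :=
      Finset.sum_le_sum_of_subset_of_nonneg hsub (fun m _ _ => by positivity)
    rw [Finset.sum_insert (Finset.notMem_erase 0 _)] at h1
    have h2 : ∑ m ∈ (boxZ n).erase 0, (((1:ℝ) + |(m:ℝ)|) ^ 2)⁻¹ ≤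
        ∑ m ∈ (boxZ n).erase 0, ((m:ℝ) ^ 2)⁻¹ := by
      apply Finset.sum_le_sum
      intro m hm
      have hm0 : m ≠ 0 := (Finset.mem_erase.mp hm).1
      have hm1 : (1:ℝ) ≤ |(m:ℝ)| := by exact_mod_cast Int.one_le_abs hm0
      apply inv_anti₀ (by positivity)
      nlinarith [sq_abs ((m:ℝ)), abs_nonneg ((m:ℝ))]
    have h3 : ∑ m ∈ (boxZ n).erase 0, ((m:ℝ) ^ 2)⁻¹ ≤ ∑' m : ℤ, ((m:ℝ) ^ 2)⁻¹ :=
      Summable.sum_le_tsum _ (fun m _ => by positivity) hsummable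
    have h4 : (((1:ℝ) + |((0:ℤ):ℝ)|) ^ 2)⁻¹ = 1 := by norm_num
    rw [hB]
    calc ∑ m ∈ boxZ n, (((1:ℝ) + |(m:ℝ)|) ^ 2)⁻¹ ≤
        (((1:ℝ) + |((0:ℤ):ℝ)|) ^ 2)⁻¹ + ∑ m ∈ (boxZ n).erase 0, (((1:ℝ) + |(m:ℝ)|) ^ 2)⁻¹ := h1
      _ ≤ 1 + ∑' m : ℤ, ((m:ℝ) ^ 2)⁻¹ := by rw [h4]; linarith
  refine ⟨C * B ^ d, by positivity, fun n => ?_⟩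
  have hstep : ∑ z ∈ (boxZd d n).erase 0, Complex.abs (phiHatEps φ ε z) ≤
      ∑ z ∈ boxZd d n, C * (∏ i, ((1:ℝ) + |(z i : ℝ)|) ^ 2)⁻¹ := by
    calc ∑ z ∈ (boxZd d n).erase 0, Complex.abs (phiHatEps φ ε z) ≤
        ∑ z ∈ (boxZd d n).erase 0, C * (∏ i, ((1:ℝ) + |(z i : ℝ)|) ^ 2)⁻¹ :=
          Finset.sum_le_sum (fun z _ => hCb z)
      _ ≤ ∑ z ∈ boxZd d n, C * (∏ i, ((1:ℝ) + |(z i : ℝ)|) ^ 2)⁻¹ :=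
          Finset.sum_le_sum_of_subset_of_nonneg (Finset.erase_subset 0 _)
            (fun z _ _ => by positivity)
  refine hstep.trans ?_
  rw [← Finset.mul_sum]
  apply mul_le_mul_of_nonneg_left ?_ hC
  have hfact : ∑ z ∈ boxZd d n, (∏ i, ((1:ℝ) + |(z i : ℝ)|) ^ 2)⁻¹ =
      ∏ _i : Fin d, ∑ m ∈ boxZ n, (((1:ℝ) + |(m:ℝ)|) ^ 2)⁻¹ := by
    rw [boxZd, Finset.prod_univ_sum]
    apply Finset.sum_congr rfl
    intro z _
    rw [← Finset.prod_inv_distrib]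
  rw [hfact]
  calc (∏ _i : Fin d, ∑ m ∈ boxZ n, (((1:ℝ) + |(m:ℝ)|) ^ 2)⁻¹) ≤ ∏ _i : Fin d, B := by
        apply Finset.prod_le_prod
        · intro i _
          apply Finset.sum_nonneg (fun m _ => by positivity)
        · intro i _
          exact hone n
    _ = B ^ d := by rw [Finset.prod_const, Finset.card_univ, Fintype.card_fin]

lemma rpow_diff_le' {p : ℝ} (hp : 1 < p) (hp2 : p ≤ 2) {a b M : ℝ} (ha : 0 ≤ a) (hb : 0 ≤ b)
    (haM : a ≤ M) (hbM : b ≤ M) :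
    |a ^ p - b ^ p| ≤ M ^ (p-1) * |a - b| + M * |a - b| ^ (p-1) := by
  wlog hab : b ≤ a with H
  · have := H hp hp2 hb ha hbM haM (le_of_not_ge hab)
    rw [abs_sub_comm, abs_sub_comm a b]
    exact this
  have hM0 : 0 ≤ M := le_trans ha haM
  set β := p - 1 with hβ
  have hβ0 : 0 < β := by rw [hβ]; linarith
  have hap : a ^ p = a * a ^ β := by
    have : p = 1 + β := by rw [hβ]; ring
    rw [this, Real.rpow_add' ha (by rw [← this]; linarith), Real.rpow_one]
  have hbp : b ^ p = b * b ^ β := by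
    have : p = 1 + β := by rw [hβ]; ring
    rw [this, Real.rpow_add' hb (by rw [← this]; linarith), Real.rpow_one]
  have hid : a ^ p - b ^ p = (a - b) * a ^ β + b * (a ^ β - b ^ β) := by
    rw [hap, hbp]; ring
  have h1 : |(a - b) * a ^ β| ≤ |a - b| * M ^ β := by
    rw [abs_mul]
    apply mul_le_mul_of_nonneg_left ?_ (abs_nonneg _)
    rw [abs_of_nonneg (Real.rpow_nonneg ha β)]
    exact Real.rpow_le_rpow ha haM hβ0.le
  have h2 : |b * (a ^ β - b ^ β)| ≤ M * |a - b| ^ β := by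
    rw [abs_mul]
    have hβ1 : β ≤ 1 := by rw [hβ]; linarith
    apply mul_le_mul (by rw [abs_of_nonneg hb]; exact hbM)
      (rpow_diff_le hβ0 hβ1 ha hb) (abs_nonneg _) hM0
  calc |a ^ p - b ^ p| ≤ |(a - b) * a ^ β| + |b * (a ^ β - b ^ β)| := by
        rw [hid]; exact abs_add_le _ _
    _ ≤ |a - b| * M ^ β + M * |a - b| ^ β := add_le_add h1 h2
    _ = M ^ (p-1) * |a - b| + M * |a - b| ^ (p-1) := by rw [hβ]; ring

lemma abs_sub_abs_le_abs_add' (u v : ℂ) :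
    |Complex.abs u - Complex.abs v| ≤ Complex.abs (u + v) := by
  rw [abs_le]
  constructor
  · have h1 : Complex.abs v ≤ Complex.abs (u + v) + Complex.abs u := by
      calc Complex.abs v = Complex.abs ((u + v) - u) := by ring_nf
        _ ≤ Complex.abs (u + v) + Complex.abs u := by
            rw [sub_eq_add_neg]
            calc Complex.abs ((u + v) + -u) ≤ Complex.abs (u + v) + Complex.abs (-u) :=
                Complex.abs.add_le _ _
              _ = Complex.abs (u + v) + Complex.abs u := by rw [AbsoluteValue.map_neg]
    linarith
  · have h2 : Complex.abs u ≤ Complex.abs (u + v) + Complex.abs v := by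
      calc Complex.abs u = Complex.abs ((u + v) - v) := by ring_nf
        _ ≤ Complex.abs (u + v) + Complex.abs v := by
            rw [sub_eq_add_neg]
            calc Complex.abs ((u + v) + -v) ≤ Complex.abs (u + v) + Complex.abs (-v) :=
                Complex.abs.add_le _ _
              _ = Complex.abs (u + v) + Complex.abs v := by rw [AbsoluteValue.map_neg]
    linarith

/-- The core estimate: for each `y`, the two absolute values are close, and the second
one is bounded. -/
lemma core_est {d : ℕ} (hd : 1 ≤ d) {f : (Fin d → ℝ) → ℝ} {M : ℝ} (hM0 : 0 ≤ M)
    (hMb : ∀ x, |f x| ≤ M)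
    (φ : SchwartzMap (Fin d → ℝ) ℝ) (ε : ℝ) {K : ℝ} (hK0 : 0 ≤ K)
    (hKb : ∀ n : ℕ, ∑ z ∈ (boxZd d n).erase 0, Complex.abs (phiHatEps φ ε z) ≤ K)
    {n : ℕ} (hn : 1 ≤ n) (y : Fin d → ℤ) :
    |Complex.abs ((((4 * Real.pi ^ 2 / (n:ℝ) ^ 2 : ℝ)) : ℂ) *
        ∑ z ∈ (boxZd d n).erase 0, phiHatEps φ ε z * e2pi (-(dotZ y z) / n) * fHatN f n z /
          ((lambdaN d n z : ℝ) : ℂ)) -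
      Complex.abs (∑ z ∈ (boxZd d n).erase 0, phiHatEps φ ε z * e2pi (-(dotZ y z) / n) *
          fHatN f n z / ((nsq z : ℝ) : ℂ))| ≤ Real.pi ^ 3 * M * K / n ∧
    Complex.abs (∑ z ∈ (boxZd d n).erase 0, phiHatEps φ ε z * e2pi (-(dotZ y z) / n) *
          fHatN f n z / ((nsq z : ℝ) : ℂ)) ≤ M * K := by
  have hπ := Real.pi_pos
  have hn0 : (0:ℝ) < (n:ℝ) := by exact_mod_cast hn
  set c : ℝ := 4 * Real.pi ^ 2 / (n:ℝ) ^ 2 with hc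
  set t : (Fin d → ℤ) → ℂ := fun z =>
    phiHatEps φ ε z * e2pi (-(dotZ y z) / n) * fHatN f n z with htdef
  have habs_t : ∀ z, Complex.abs (t z) ≤ Complex.abs (phiHatEps φ ε z) * M := by
    intro z
    rw [htdef]
    simp only [map_mul, abs_e2pi, mul_one]
    exact mul_le_mul_of_nonneg_left (abs_fHatN_le hMb hn z) (AbsoluteValue.nonneg _ _)
  -- second part
  have hS2 : Complex.abs (∑ z ∈ (boxZd d n).erase 0, t z / ((nsq z : ℝ) : ℂ)) ≤ M * K := by
    calc Complex.abs (∑ z ∈ (boxZd d n).erase 0, t z / ((nsq z : ℝ) : ℂ)) ≤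
        ∑ z ∈ (boxZd d n).erase 0, Complex.abs (t z / ((nsq z : ℝ) : ℂ)) :=
          AbsoluteValue.sum_le _ _ _
      _ ≤ ∑ z ∈ (boxZd d n).erase 0, M * Complex.abs (phiHatEps φ ε z) := by
          apply Finset.sum_le_sum
          intro z hz
          have hQ1 : 1 ≤ nsq z := nsq_ge_one (Finset.mem_erase.mp hz).1
          rw [map_div₀, Complex.abs_ofReal, abs_of_pos (by linarith)]
          calc Complex.abs (t z) / nsq z ≤ Complex.abs (t z) :=
                div_le_self (AbsoluteValue.nonneg _ _) hQ1
            _ ≤ Complex.abs (phiHatEps φ ε z) * M := habs_t z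
            _ = M * Complex.abs (phiHatEps φ ε z) := mul_comm _ _
      _ = M * ∑ z ∈ (boxZd d n).erase 0, Complex.abs (phiHatEps φ ε z) := by
          rw [Finset.mul_sum]
      _ ≤ M * K := mul_le_mul_of_nonneg_left (hKb n) hM0
  refine ⟨?_, hS2⟩
  -- first part
  have hcomb : ((c : ℝ) : ℂ) * (∑ z ∈ (boxZd d n).erase 0, t z / ((lambdaN d n z : ℝ) : ℂ)) +
      (∑ z ∈ (boxZd d n).erase 0, t z / ((nsq z : ℝ) : ℂ)) =
      ∑ z ∈ (boxZd d n).erase 0, t z *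
        (((c / lambdaN d n z + 1 / nsq z : ℝ)) : ℂ) := by
    rw [Finset.mul_sum, ← Finset.sum_add_distrib]
    apply Finset.sum_congr rfl
    intro z _
    push_cast
    ring
  have hbound : Complex.abs (∑ z ∈ (boxZd d n).erase 0, t z *
      (((c / lambdaN d n z + 1 / nsq z : ℝ)) : ℂ)) ≤ Real.pi ^ 3 * M * K / n := by
    calc Complex.abs (∑ z ∈ (boxZd d n).erase 0, t z *
        (((c / lambdaN d n z + 1 / nsq z : ℝ)) : ℂ)) ≤
        ∑ z ∈ (boxZd d n).erase 0, Complex.abs (t z *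
          (((c / lambdaN d n z + 1 / nsq z : ℝ)) : ℂ)) := AbsoluteValue.sum_le _ _ _
      _ ≤ ∑ z ∈ (boxZd d n).erase 0,
          (Real.pi ^ 3 * M / (4 * n)) * Complex.abs (phiHatEps φ ε z) := by
          apply Finset.sum_le_sum
          intro z hz
          rw [map_mul, Complex.abs_ofReal]
          have hcmp := (lambda_comparison hd hn hz).2
          calc Complex.abs (t z) * |c / lambdaN d n z + 1 / nsq z| ≤
              (Complex.abs (phiHatEps φ ε z) * M) * (Real.pi ^ 3 / (4 * n)) := by
                apply mul_le_mul (habs_t z) hcmp (abs_nonneg _) (by positivity)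
            _ = (Real.pi ^ 3 * M / (4 * n)) * Complex.abs (phiHatEps φ ε z) := by ring
      _ = (Real.pi ^ 3 * M / (4 * n)) *
          ∑ z ∈ (boxZd d n).erase 0, Complex.abs (phiHatEps φ ε z) := by
          rw [Finset.mul_sum]
      _ ≤ (Real.pi ^ 3 * M / (4 * n)) * K := by
          apply mul_le_mul_of_nonneg_left (hKb n) (by positivity)
      _ ≤ Real.pi ^ 3 * M * K / n := by
          rw [div_mul_eq_mul_div, div_le_div_iff₀ (by positivity) hn0]
          nlinarith [mul_nonneg (mul_nonneg (pow_nonneg hπ.le 3) hM0) hK0]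
  calc |Complex.abs (((c : ℝ) : ℂ) * ∑ z ∈ (boxZd d n).erase 0,
        t z / ((lambdaN d n z : ℝ) : ℂ)) -
      Complex.abs (∑ z ∈ (boxZd d n).erase 0, t z / ((nsq z : ℝ) : ℂ))| ≤
      Complex.abs (((c : ℝ) : ℂ) * (∑ z ∈ (boxZd d n).erase 0,
        t z / ((lambdaN d n z : ℝ) : ℂ)) +
        (∑ z ∈ (boxZd d n).erase 0, t z / ((nsq z : ℝ) : ℂ))) := by
        have := abs_sub_abs_le_abs_add'
          (((c : ℝ) : ℂ) * ∑ z ∈ (boxZd d n).erase 0, t z / ((lambdaN d n z : ℝ) : ℂ))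
          (∑ z ∈ (boxZd d n).erase 0, t z / ((nsq z : ℝ) : ℂ))
        exact this
    _ ≤ Real.pi ^ 3 * M * K / n := by rw [hcomb]; exact hbound

lemma tendsto_const_div_rpow (C q : ℝ) (hq : 0 < q) :
    Tendsto (fun n : ℕ => (C / n) ^ q) atTop (𝓝 0) := by
  have h1 : Tendsto (fun n : ℕ => C / (n:ℝ)) atTop (𝓝 0) :=
    tendsto_const_div_atTop_nhds_zero_nat C
  have h2 : ContinuousAt (fun x : ℝ => x ^ q) 0 :=
    Real.continuousAt_rpow_const 0 q (Or.inr hq.le)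
  have h3 := h2.tendsto.comp h1
  simpa [Real.zero_rpow hq.ne', Function.comp_def] using h3

/-- (Step 3.) For every `ε > 0`,
`lim_n |(4π²)^α n^{−d−2α} ∑_{x∈𝕋_n^d} |∑_{z≠0} φ̂_ε(z) e^{−2πi z·x} f̂_n(z)/λ_z|^α −
n^{−d} ∑_{x∈𝕋_n^d} |∑_{z≠0} φ̂_ε(z) e^{−2πi z·x} f̂_n(z)/‖z‖²|^α| = 0`. -/
theorem step3 (d : ℕ) (hd : 1 ≤ d) (α : ℝ) (hα1 : 0 < α) (hα2 : α ≤ 2)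
    (f : (Fin d → ℝ) → ℝ) (hf : IsSmoothPeriodicMeanZero f)
    (φ : SchwartzMap (Fin d → ℝ) ℝ) (hφ : (∫ x : Fin d → ℝ, φ x) = 1)
    (ε : ℝ) (hε : 0 < ε) :
    Tendsto
      (fun n : ℕ =>
        |(4 * Real.pi ^ 2) ^ α * (n : ℝ) ^ (-(d : ℝ) - 2 * α) *
            ∑ y ∈ boxZd d n,
              ‖∑ z ∈ (boxZd d n).erase 0,
                phiHatEps φ ε z * e2pi (-(dotZ y z) / n) * fHatN f n z /
                  ((lambdaN d n z : ℝ) : ℂ)‖ ^ α -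
          (n : ℝ) ^ (-(d : ℝ)) *
            ∑ y ∈ boxZd d n,
              ‖∑ z ∈ (boxZd d n).erase 0,
                phiHatEps φ ε z * e2pi (-(dotZ y z) / n) * fHatN f n z /
                  ((nsq z : ℝ) : ℂ)‖ ^ α|)
      atTop (𝓝 0) := by
  obtain ⟨M, hM0, hMb⟩ := exists_bound_of_periodic hf
  obtain ⟨K, hK0, hKb⟩ := sum_phiHatEps_bound φ hε
  have hπ := Real.pi_pos
  set δ : ℕ → ℝ := fun n => Real.pi ^ 3 * M * K / n with hδdef
  have hδ0 : ∀ n : ℕ, 1 ≤ n → 0 ≤ δ n := by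
    intro n hn
    have hn0 : (0:ℝ) < (n:ℝ) := by exact_mod_cast hn
    rw [hδdef]
    positivity
  set M₁ : ℝ := M * K * (1 + Real.pi ^ 3) with hM₁def
  have hM₁0 : 0 ≤ M₁ := by positivity
  have hMK₁ : M * K ≤ M₁ := by nlinarith [mul_nonneg hM0 hK0, pow_nonneg hπ.le 3]
  have hδle : ∀ n : ℕ, 1 ≤ n → δ n ≤ Real.pi ^ 3 * M * K := by
    intro n hn
    have hn1 : (1:ℝ) ≤ (n:ℝ) := by exact_mod_cast hn
    rw [hδdef]
    exact div_le_self (by positivity) hn1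
  -- the master bound, for n ≥ 1
  have master : ∀ B : ℝ, ∀ n : ℕ, 1 ≤ n →
      (∀ a b : ℝ, 0 ≤ a → 0 ≤ b → a ≤ M₁ → b ≤ M₁ → |a - b| ≤ δ n → |a ^ α - b ^ α| ≤ B) →
      |(4 * Real.pi ^ 2) ^ α * (n : ℝ) ^ (-(d : ℝ) - 2 * α) *
            ∑ y ∈ boxZd d n,
              Complex.abs (∑ z ∈ (boxZd d n).erase 0,
                phiHatEps φ ε z * e2pi (-(dotZ y z) / n) * fHatN f n z /
                  ((lambdaN d n z : ℝ) : ℂ)) ^ α -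
          (n : ℝ) ^ (-(d : ℝ)) *
            ∑ y ∈ boxZd d n,
              Complex.abs (∑ z ∈ (boxZd d n).erase 0,
                phiHatEps φ ε z * e2pi (-(dotZ y z) / n) * fHatN f n z /
                  ((nsq z : ℝ) : ℂ)) ^ α| ≤ B := by
    intro B n hn hB
    have hn0 : (0:ℝ) < (n:ℝ) := by exact_mod_cast hn
    set c : ℝ := 4 * Real.pi ^ 2 / (n:ℝ) ^ 2 with hcdef
    have hc0 : 0 < c := by rw [hcdef]; positivity
    set S1 : (Fin d → ℤ) → ℂ := fun y => ∑ z ∈ (boxZd d n).erase 0,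
      phiHatEps φ ε z * e2pi (-(dotZ y z) / n) * fHatN f n z /
        ((lambdaN d n z : ℝ) : ℂ) with hS1def
    set S2 : (Fin d → ℤ) → ℂ := fun y => ∑ z ∈ (boxZd d n).erase 0,
      phiHatEps φ ε z * e2pi (-(dotZ y z) / n) * fHatN f n z /
        ((nsq z : ℝ) : ℂ) with hS2def
    have hBnonneg : 0 ≤ B := by
      have := hB 0 0 le_rfl le_rfl hM₁0 hM₁0 (by simpa using hδ0 n hn)
      simpa using this
    -- rewrite the first factor
    have e1 : (n:ℝ) ^ (-(d:ℝ) - 2*α) = (n:ℝ) ^ (-(d:ℝ)) * ((n:ℝ) ^ (2*α))⁻¹ := by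
      rw [← Real.rpow_neg hn0.le (2*α), ← Real.rpow_add hn0]
      ring_nf
    have e2 : (n:ℝ) ^ (2*α) = (((n:ℝ)^2 : ℝ)) ^ α := by
      rw [← Real.rpow_natCast (n:ℝ) 2, ← Real.rpow_mul hn0.le]
      norm_num
    have hconst : (4*Real.pi^2) ^ α * (n:ℝ) ^ (-(d:ℝ)-2*α) = (n:ℝ) ^ (-(d:ℝ)) * c ^ α := by
      rw [hcdef, Real.div_rpow (by positivity) (by positivity), e1, e2]
      ring
    have hsum1 : (4*Real.pi^2) ^ α * (n:ℝ) ^ (-(d:ℝ) - 2*α) *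
        ∑ y ∈ boxZd d n, (Complex.abs (S1 y)) ^ α
        = (n:ℝ) ^ (-(d:ℝ)) * ∑ y ∈ boxZd d n, (Complex.abs (((c:ℝ):ℂ) * S1 y)) ^ α := by
      rw [hconst, mul_assoc]
      congr 1
      rw [Finset.mul_sum]
      apply Finset.sum_congr rfl
      intro y _
      rw [map_mul, Complex.abs_ofReal, abs_of_pos hc0,
        Real.mul_rpow hc0.le (AbsoluteValue.nonneg _ _)]
    rw [hsum1]
    have hsplit : (n:ℝ) ^ (-(d:ℝ)) * ∑ y ∈ boxZd d n, (Complex.abs (((c:ℝ):ℂ) * S1 y)) ^ α -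
        (n:ℝ) ^ (-(d:ℝ)) * ∑ y ∈ boxZd d n, (Complex.abs (S2 y)) ^ α =
        (n:ℝ) ^ (-(d:ℝ)) * ∑ y ∈ boxZd d n,
          ((Complex.abs (((c:ℝ):ℂ) * S1 y)) ^ α - (Complex.abs (S2 y)) ^ α) := by
      rw [Finset.sum_sub_distrib, mul_sub]
    rw [hsplit, abs_mul, abs_of_nonneg (Real.rpow_nonneg hn0.le _)]
    have hterm : ∀ y ∈ boxZd d n,
        |(Complex.abs (((c:ℝ):ℂ) * S1 y)) ^ α - (Complex.abs (S2 y)) ^ α| ≤ B := by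
      intro y _
      have hcore := core_est hd hM0 hMb φ ε hK0 hKb hn y
      have hd1 : |Complex.abs (((c:ℝ):ℂ) * S1 y) - Complex.abs (S2 y)| ≤ δ n := by
        rw [hδdef, hS1def, hS2def]
        exact hcore.1
      have hb2 : Complex.abs (S2 y) ≤ M * K := by rw [hS2def]; exact hcore.2
      have ha2 : Complex.abs (((c:ℝ):ℂ) * S1 y) ≤ M₁ := by
        have h3 : Complex.abs (((c:ℝ):ℂ) * S1 y) ≤ Complex.abs (S2 y) + δ n := by
          have := abs_le.mp hd1
          linarith [this.2]
        calc Complex.abs (((c:ℝ):ℂ) * S1 y) ≤ Complex.abs (S2 y) + δ n := h3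
          _ ≤ M * K + Real.pi ^ 3 * M * K := add_le_add hb2 (hδle n hn)
          _ = M₁ := by rw [hM₁def]; ring
      exact hB _ _ (AbsoluteValue.nonneg _ _) (AbsoluteValue.nonneg _ _) ha2
        (le_trans hb2 hMK₁) hd1
    calc (n:ℝ) ^ (-(d:ℝ)) * |∑ y ∈ boxZd d n,
          ((Complex.abs (((c:ℝ):ℂ) * S1 y)) ^ α - (Complex.abs (S2 y)) ^ α)| ≤
        (n:ℝ) ^ (-(d:ℝ)) * ∑ y ∈ boxZd d n,
          |(Complex.abs (((c:ℝ):ℂ) * S1 y)) ^ α - (Complex.abs (S2 y)) ^ α| := by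
          apply mul_le_mul_of_nonneg_left (Finset.abs_sum_le_sum_abs _ _)
            (Real.rpow_nonneg hn0.le _)
      _ ≤ (n:ℝ) ^ (-(d:ℝ)) * ∑ _y ∈ boxZd d n, B := by
          apply mul_le_mul_of_nonneg_left (Finset.sum_le_sum hterm)
            (Real.rpow_nonneg hn0.le _)
      _ = (n:ℝ) ^ (-(d:ℝ)) * ((n:ℝ) ^ (d:ℕ) * B) := by
          rw [Finset.sum_const, card_boxZd, nsmul_eq_mul]
          push_cast
          ring
      _ = B := by
          rw [← Real.rpow_natCast (n:ℝ) d, ← mul_assoc, ← Real.rpow_add hn0]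
          simp
  -- now two cases according to α
  rcases le_or_gt α 1 with hα | hα
  · apply squeeze_zero' (Filter.Eventually.of_forall (fun n => abs_nonneg _))
      (g := fun n : ℕ => (Real.pi ^ 3 * M * K / n) ^ α)
    · filter_upwards [Filter.eventually_ge_atTop 1] with n hn
      apply master _ n hn
      intro a b ha hb haM hbM hab
      calc |a ^ α - b ^ α| ≤ |a - b| ^ α := rpow_diff_le hα1 hα ha hb
        _ ≤ (δ n) ^ α := Real.rpow_le_rpow (abs_nonneg _) hab hα1.le
        _ = (Real.pi ^ 3 * M * K / n) ^ α := by rw [hδdef]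
    · exact tendsto_const_div_rpow _ _ hα1
  · apply squeeze_zero' (Filter.Eventually.of_forall (fun n => abs_nonneg _))
      (g := fun n : ℕ => M₁ ^ (α - 1) * (Real.pi ^ 3 * M * K / n) +
        M₁ * (Real.pi ^ 3 * M * K / n) ^ (α - 1))
    · filter_upwards [Filter.eventually_ge_atTop 1] with n hn
      apply master _ n hn
      intro a b ha hb haM hbM hab
      have h1 := rpow_diff_le' hα hα2 ha hb haM hbM
      have h2 : M₁ ^ (α - 1) * |a - b| ≤ M₁ ^ (α - 1) * (Real.pi ^ 3 * M * K / n) := by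
        apply mul_le_mul_of_nonneg_left ?_ (Real.rpow_nonneg hM₁0 _)
        rw [hδdef] at hab
        exact hab
      have h3 : M₁ * |a - b| ^ (α - 1) ≤ M₁ * (Real.pi ^ 3 * M * K / n) ^ (α - 1) := by
        apply mul_le_mul_of_nonneg_left ?_ hM₁0
        apply Real.rpow_le_rpow (abs_nonneg _) ?_ (by linarith)
        rw [hδdef] at hab
        exact hab
      linarith
    · have t1 : Tendsto (fun n : ℕ => M₁ ^ (α - 1) * (Real.pi ^ 3 * M * K / n))
          atTop (𝓝 0) := by
        have := (tendsto_const_div_atTop_nhds_zero_nat (Real.pi ^ 3 * M * K)).const_mul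
          (M₁ ^ (α - 1))
        simpa using this
      have t2 : Tendsto (fun n : ℕ => M₁ * (Real.pi ^ 3 * M * K / n) ^ (α - 1))
          atTop (𝓝 0) := by
        have := (tendsto_const_div_rpow (Real.pi ^ 3 * M * K) (α - 1)
          (by linarith)).const_mul M₁
        simpa using this
      simpa using t1.add t2
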